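/- The correspondence between decorated rank vectors and injective g-vectors is bijective: the map Z^n → Z^n sending v to g with g_i = -v_i + Σ_j [-b_{ij}]_+ [v_j]_+ is a bijection, with inverse constructed by iterating over vertices in a topological order of the acyclic orientation: picking a sink i_1 and setting v_{i_1} = -g_{i_1}, then inductively v_{i_t} = -g_{i_t} + Σ_{s<t} [-b_{i_t,i_s}]_+ [v_{i_s}]_+. -/
import Mathlib

private def stmt17Inv (n : ℕ) (B : Matrix (Fin n) (Fin n) ℤ) (g : Fin n → ℤ)
    (i : Fin n) : ℤ :=
  -g i + ∑ j : Fin n, if h : j < i then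
      max (-(B i j)) 0 * max (stmt17Inv n B g j) 0 else 0
termination_by i.val
decreasing_by exact h

private lemma stmt17key (n : ℕ) (B : Matrix (Fin n) (Fin n) ℤ)
    (hacy : ∀ i j : Fin n, i ≤ j → max (-(B i j)) 0 = 0) (v : Fin n → ℤ) (i : Fin n) :
    ∑ j, max (-(B i j)) 0 * max (v j) 0
      = ∑ j : Fin n, if j < i then max (-(B i j)) 0 * max (v j) 0 else 0 := by
  apply Finset.sum_congr rfl
  intro j _
  by_cases h : j < i
  · simp [h]
  · simp [h, hacy i j (le_of_not_gt h)]

/-- The piecewise-linear map `v ↦ g`, `g_i = -v_i + ∑_j [-b_{ij}]_+ [v_j]_+`,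
from decorated rank vectors to injective g-vectors is a bijection `ℤ^n → ℤ^n`, when the
orientation is acyclic (vertices topologically ordered so `[-b_{ij}]_+ = 0` for `i ≤ j`). -/
theorem stmt17 (n : ℕ) (B : Matrix (Fin n) (Fin n) ℤ)
    (hacy : ∀ i j : Fin n, i ≤ j → max (-(B i j)) 0 = 0) :
    Function.Bijective (fun v : Fin n → ℤ =>
      fun i => -v i + ∑ j, max (-(B i j)) 0 * max (v j) 0) := by
  constructor
  · intro v w h
    funext i
    have IH : ∀ i : Fin n, (∀ j : Fin n, j < i → v j = w j) → v i = w i := by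
      intro i IH
      have hi := congrFun h i
      simp only at hi
      rw [stmt17key n B hacy v i, stmt17key n B hacy w i] at hi
      have hsum : ∑ j : Fin n, (if j < i then max (-(B i j)) 0 * max (v j) 0 else 0)
          = ∑ j : Fin n, (if j < i then max (-(B i j)) 0 * max (w j) 0 else 0) := by
        apply Finset.sum_congr rfl
        intro j _
        by_cases hj : j < i
        · simp [hj, IH j hj]
        · simp [hj]
      rw [hsum] at hi
      linarith
    exact WellFoundedLT.induction i IH
  · intro g
    refine ⟨stmt17Inv n B g, ?_⟩
    funext i
    simp only
    rw [stmt17key n B hacy (stmt17Inv n B g) i]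
    rw [stmt17Inv]
    have : ∀ j : Fin n, (if h : j < i then
        max (-(B i j)) 0 * max (stmt17Inv n B g j) 0 else 0)
        = (if j < i then max (-(B i j)) 0 * max (stmt17Inv n B g j) 0 else 0) := by
      intro j; split <;> simp_all
    simp only [this]
    ring
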